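/- (Global abelianness) Fix an instruction field I and V ⊆ ℤ^d. If α and β are both legal sequences of topplings for (η,h), both contained in V, and both stabilize (η,h) in V, then m_α = m_β = m_{V,η,h}; in particular Φ_α(η,h) = Φ_β(η,h). -/
import Mathlib


open scoped ENNReal NNReal
open MeasureTheory

namespace ARW

/-- A site of the lattice `ℤ^d`. -/
abbrev Site (d : ℕ) := Fin d → ℤ

/-- The set `ℕ_𝔰 = ℕ ∪ {𝔰}` of possible values at a site. -/
inductive NS where
  | nat : ℕ → NS
  | s : NS
deriving DecidableEq

/-- Rank function realizing the total order `0 < 𝔰 < 1 < 2 < ⋯`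
(`𝔰` is placed at `1/2`). -/
def NS.val : NS → ℚ
  | .nat n => n
  | .s => 1/2

instance : LE NS := ⟨fun a b => a.val ≤ b.val⟩
instance : LT NS := ⟨fun a b => a.val < b.val⟩

/-- Remove one particle: `n − 1`, with `𝔰 − 1 = 0`. -/
def NS.dec : NS → NS
  | .nat 0 => .nat 0
  | .nat (n+1) => .nat n
  | .s => .nat 0

/-- Add one particle: `n + 1`, with `𝔰 + 1 = 2`. -/
def NS.inc : NS → NS
  | .nat n => .nat (n+1)
  | .s => .nat 2

/-- Multiplication by `𝔰`: `n·𝔰 = n` for `n ≥ 2`, `1·𝔰 = 𝔰`, `𝔰·𝔰 = 𝔰`. -/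
def NS.mulS : NS → NS
  | .nat 0 => .nat 0
  | .nat 1 => .s
  | .nat (n+2) => .nat (n+2)
  | .s => .s

/-- A configuration of the ARW. -/
abbrev Config (d : ℕ) := Site d → NS

/-- An odometer. -/
abbrev Odom (d : ℕ) := Site d → ℕ

/-- An instruction: either a sleep instruction `τ_{x𝔰}`, or a move instruction
`τ_{xy}` recorded through the displacement `z = y − x ≠ 0`. -/
inductive Instr (d : ℕ) where
  | sleep : Instr d
  | move : (z : Site d) → z ≠ 0 → Instr d

/-- Applying an instruction at site `x` to a configuration: `τ_{x𝔰}` replaces `η(x)` by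
`η(x)·𝔰`; `τ_{xy}` (with `y = x + z`) decreases `η(x)` by one and increases `η(y)` by one. -/
def applyInstr {d : ℕ} (x : Site d) (ι : Instr d) (η : Config d) : Config d :=
  match ι with
  | .sleep => Function.update η x (η x).mulS
  | .move z _ => fun w =>
      if w = x then (η x).dec
      else if w = x + z then (η (x + z)).inc
      else η w

/-- A field of instructions `(τ^{x,j})_{x ∈ ℤ^d, j ∈ ℕ}`. -/
abbrev InstrField (d : ℕ) := Site d → ℕ → Instr d

/-- Toppling site `x`: `Φ_x(η,h) = (τ^{x,h(x)+1} η, h + δ_x)`. -/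
def topple {d : ℕ} (I : InstrField d) (x : Site d) (s : Config d × Odom d) :
    Config d × Odom d :=
  (applyInstr x (I x (s.2 x + 1)) s.1, Function.update s.2 x (s.2 x + 1))

/-- `Φ_α` for a finite sequence `α = (x_1, …, x_k)` of sites (`x_1` acts first). -/
def toppleSeq {d : ℕ} (I : InstrField d) :
    List (Site d) → Config d × Odom d → Config d × Odom d
  | [], s => s
  | x :: α, s => toppleSeq I α (topple I x s)

/-- Site `x` is unstable for `η` if `η(x) ≥ 1`. -/
def Unstable {d : ℕ} (η : Config d) (x : Site d) : Prop := NS.nat 1 ≤ η x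

/-- Toppling `x` is acceptable for `η` if `η(x) ≠ 0`. -/
def AcceptableAt {d : ℕ} (η : Config d) (x : Site d) : Prop := η x ≠ NS.nat 0

/-- `α` is a legal sequence of topplings for `(η,h)`: each successive toppling is legal. -/
inductive LegalSeq {d : ℕ} (I : InstrField d) : List (Site d) → Config d × Odom d → Prop
  | nil (s : Config d × Odom d) : LegalSeq I [] s
  | cons {x : Site d} {α : List (Site d)} {s : Config d × Odom d} :
      Unstable s.1 x → LegalSeq I α (topple I x s) → LegalSeq I (x :: α) s

/-- `α` is an acceptable sequence of topplings for `(η,h)`. -/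
inductive AcceptableSeq {d : ℕ} (I : InstrField d) : List (Site d) → Config d × Odom d → Prop
  | nil (s : Config d × Odom d) : AcceptableSeq I [] s
  | cons {x : Site d} {α : List (Site d)} {s : Config d × Odom d} :
      AcceptableAt s.1 x → AcceptableSeq I α (topple I x s) → AcceptableSeq I (x :: α) s

/-- `η` is stable in `V`: every `x ∈ V` is stable for `η`. -/
def StableIn {d : ℕ} (η : Config d) (V : Set (Site d)) : Prop :=
  ∀ x ∈ V, ¬ Unstable η x

/-- `m_{V,η,h}(x) = sup { m_β(x) : β ⊆ V legal for (η,h) }`, as an element of `ℕ∞`. -/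
noncomputable def mV {d : ℕ} (I : InstrField d) (V : Set (Site d)) (η : Config d) (h : Odom d)
    (x : Site d) : ℕ∞ :=
  ⨆ (β : List (Site d)) (_ : (∀ y ∈ β, y ∈ V) ∧ LegalSeq I β (η, h)), (β.count x : ℕ∞)

/-- `m_{η,h} = m_{ℤ^d,η,h}`. -/
noncomputable def mFull {d : ℕ} (I : InstrField d) (η : Config d) (h : Odom d) :
    Site d → ℕ∞ :=
  mV I Set.univ η h

/-- The zero odometer. -/
def zeroOdom (d : ℕ) : Odom d := fun _ => 0

/-- `η` is `I`-stabilizable: `m_{η;I}(x) < ∞` for every `x`. -/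
def Stabilizable {d : ℕ} (I : InstrField d) (η : Config d) : Prop :=
  ∀ x : Site d, mFull I η (zeroOdom d) x < ⊤

/-- `η` is `I`-explosive: `m_{η;I}(x) = ∞` for every `x`. -/
def Explosive {d : ℕ} (I : InstrField d) (η : Config d) : Prop :=
  ∀ x : Site d, mFull I η (zeroOdom d) x = ⊤

section Aux

variable {d : ℕ}

lemma NS.inc_dec' (n : ℕ) : ((NS.nat (n+1)).dec).inc = NS.nat (n+1) := rfl
lemma NS.dec_inc' (n : ℕ) : ((NS.nat (n+1)).inc).dec = NS.nat (n+1) := rfl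
lemma NS.mulS_inc' (n : ℕ) : ((NS.nat (n+1)).inc).mulS = (NS.nat (n+1)).inc := rfl
lemma NS.inc_mulS' (n : ℕ) : ((NS.nat (n+1)).mulS).inc = (NS.nat (n+1)).inc := by
  cases n <;> rfl

lemma unstable_iff {η : Config d} {x : Site d} :
    Unstable η x ↔ ∃ n, η x = NS.nat (n+1) := by
  unfold Unstable
  constructor
  · intro h
    cases hx : η x with
    | s =>
        exfalso
        rw [hx] at h
        have : ((1:ℕ) : ℚ) ≤ 1/2 := h
        norm_num at this
    | nat n =>
        cases n with
        | zero =>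
            exfalso
            rw [hx] at h
            have : ((1:ℕ) : ℚ) ≤ ((0:ℕ) : ℚ) := h
            norm_num at this
        | succ m => exact ⟨m, rfl⟩
  · rintro ⟨n, hn⟩
    rw [hn]
    show ((1:ℕ) : ℚ) ≤ ((n+1:ℕ) : ℚ)
    exact_mod_cast Nat.succ_le_succ (Nat.zero_le n)

lemma unstable_topple_ne {I : InstrField d} {s : Config d × Odom d} {x y : Site d}
    (hxy : x ≠ y) (h : Unstable s.1 x) : Unstable (topple I y s).1 x := by
  rw [unstable_iff] at h ⊢
  obtain ⟨n, hn⟩ := h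
  simp only [topple]
  cases I y (s.2 y + 1) with
  | sleep =>
      refine ⟨n, ?_⟩
      simp [applyInstr, Function.update_apply, hxy, hn]
  | move z hz =>
      simp only [applyInstr]
      by_cases h2 : x = y + z
      · refine ⟨n+1, ?_⟩
        rw [if_neg hxy, if_pos h2, ← h2, hn]
        rfl
      · refine ⟨n, ?_⟩
        rw [if_neg hxy, if_neg h2, hn]

lemma unstable_toppleSeq {I : InstrField d} {x : Site d} :
    ∀ (β : List (Site d)) (s : Config d × Odom d), x ∉ β → Unstable s.1 x →
      Unstable (toppleSeq I β s).1 x := by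
  intro β
  induction β with
  | nil => intro s _ h; exact h
  | cons y β' ih =>
      intro s hx h
      have hxy : x ≠ y := fun hc => hx (by simp [hc])
      exact ih (topple I y s) (fun hc => hx (by simp [hc])) (unstable_topple_ne hxy h)

lemma mem_of_unstable_stab {I : InstrField d} {V : Set (Site d)} {β : List (Site d)}
    {s : Config d × Odom d} {x : Site d} (hx : Unstable s.1 x) (hxV : x ∈ V)
    (hstab : StableIn (toppleSeq I β s).1 V) : x ∈ β := by
  by_contra hc
  exact hstab x hxV (unstable_toppleSeq β s hc hx)

set_option maxRecDepth 10000 in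
set_option linter.unreachableTactic false in
set_option linter.unusedTactic false in
lemma applyInstr_comm {x y : Site d} (hxy : x ≠ y) (ιx ιy : Instr d) (η : Config d)
    {m k : ℕ} (hm : η x = NS.nat (m+1)) (hk : η y = NS.nat (k+1)) :
    applyInstr x ιx (applyInstr y ιy η) = applyInstr y ιy (applyInstr x ιx η) := by
  have hyx : y ≠ x := Ne.symm hxy
  funext w
  cases ιx <;> cases ιy <;>
    simp only [applyInstr, Function.update_apply] <;>
    split_ifs <;>
    (try subst_vars) <;>
    first
      | rfl
      | (exfalso; tauto)
      | (simp only [hm, hk, NS.inc_dec', NS.dec_inc', NS.mulS_inc', NS.inc_mulS'])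
      | (apply congrArg; apply congrArg; apply congrArg;
         first | assumption | (symm; assumption))

lemma topple_comm {I : InstrField d} {x y : Site d} (hxy : x ≠ y)
    {s : Config d × Odom d} (hx : Unstable s.1 x) (hy : Unstable s.1 y) :
    topple I x (topple I y s) = topple I y (topple I x s) := by
  obtain ⟨m, hm⟩ := unstable_iff.1 hx
  obtain ⟨k, hk⟩ := unstable_iff.1 hy
  have hyx : y ≠ x := Ne.symm hxy
  unfold topple
  refine Prod.ext ?_ ?_
  · simp only [Function.update_of_ne hxy, Function.update_of_ne hyx]
    exact applyInstr_comm hxy _ _ _ hm hk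
  · simp only [Function.update_of_ne hxy, Function.update_of_ne hyx]
    exact Function.update_comm hyx _ _ _

lemma move_front {I : InstrField d} {x : Site d} :
    ∀ (γ δ : List (Site d)) (s : Config d × Odom d), x ∉ γ → Unstable s.1 x →
      LegalSeq I (γ ++ x :: δ) s →
      LegalSeq I (x :: (γ ++ δ)) s ∧
        toppleSeq I (x :: (γ ++ δ)) s = toppleSeq I (γ ++ x :: δ) s := by
  intro γ
  induction γ with
  | nil => intro δ s _ _ hl; exact ⟨hl, rfl⟩
  | cons y γ' ih =>
      intro δ s hxγ hx hl
      have hxy : x ≠ y := fun hc => hxγ (by simp [hc])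
      cases hl with
      | cons hy hl' =>
          have hx' : Unstable (topple I y s).1 x := unstable_topple_ne hxy hx
          obtain ⟨ih1, ih2⟩ := ih δ (topple I y s) (fun hc => hxγ (by simp [hc])) hx' hl'
          have hcomm := topple_comm hxy hx hy (I := I)
          cases ih1 with
          | cons _ ihl =>
              constructor
              · exact LegalSeq.cons hx
                  (LegalSeq.cons (unstable_topple_ne (Ne.symm hxy) hy)
                    (hcomm ▸ ihl))
              · show toppleSeq I (γ' ++ δ) (topple I y (topple I x s)) = _
                rw [← hcomm]
                exact ih2

lemma exists_split {x : Site d} :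
    ∀ {l : List (Site d)}, x ∈ l → ∃ γ δ, l = γ ++ x :: δ ∧ x ∉ γ := by
  intro l
  induction l with
  | nil => simp
  | cons b l ih =>
      intro h
      by_cases hb : x = b
      · exact ⟨[], l, by simp [hb], by simp⟩
      · obtain ⟨γ, δ, h1, h2⟩ := ih (by
          rcases List.mem_cons.1 h with h' | h'
          · exact absurd h' hb
          · exact h')
        exact ⟨b :: γ, δ, by rw [h1]; rfl, by simp [hb, h2]⟩

lemma count_le {I : InstrField d} {V : Set (Site d)} :
    ∀ (α β : List (Site d)) (s : Config d × Odom d), LegalSeq I α s →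
      (∀ y ∈ α, y ∈ V) → LegalSeq I β s → StableIn (toppleSeq I β s).1 V →
      ∀ x, α.count x ≤ β.count x := by
  intro α
  induction α with
  | nil => intro β s _ _ _ _ x; simp
  | cons a α' ih =>
      intro β s hα hαV hβ hstab x
      cases hα with
      | cons ha hα' =>
          have haβ : a ∈ β := mem_of_unstable_stab ha (hαV a (by simp)) hstab
          obtain ⟨γ, δ, rfl, haγ⟩ := exists_split haβ
          obtain ⟨hleg, hseq⟩ := move_front γ δ s haγ ha hβ
          cases hleg with
          | cons _ hleg' =>
              have hstab' : StableIn (toppleSeq I (γ ++ δ) (topple I a s)).1 V := by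
                have : toppleSeq I (γ ++ δ) (topple I a s) = toppleSeq I (γ ++ a :: δ) s :=
                  hseq
                rw [this]; exact hstab
              have h := ih (γ ++ δ) (topple I a s) hα'
                (fun y hy => hαV y (by simp [hy])) hleg' hstab' x
              have hcount : (γ ++ a :: δ).count x = (a :: (γ ++ δ)).count x :=
                (List.perm_middle (a := a) (l₁ := γ) (l₂ := δ)).count_eq x
              rw [hcount]
              rw [List.count_cons, List.count_cons]
              omega

lemma final_eq {I : InstrField d} {V : Set (Site d)} :
    ∀ (α β : List (Site d)) (s : Config d × Odom d), LegalSeq I α s →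
      (∀ y ∈ α, y ∈ V) → LegalSeq I β s → (∀ y ∈ β, y ∈ V) →
      StableIn (toppleSeq I α s).1 V → StableIn (toppleSeq I β s).1 V →
      toppleSeq I α s = toppleSeq I β s := by
  intro α
  induction α with
  | nil =>
      intro β s _ _ hβ hβV hαs hβs
      cases β with
      | nil => rfl
      | cons b β' =>
          cases hβ with
          | cons hb _ => exact absurd hb (hαs b (hβV b (by simp)))
  | cons a α' ih =>
      intro β s hα hαV hβ hβV hαs hβs
      cases hα with
      | cons ha hα' =>
          have haβ : a ∈ β := mem_of_unstable_stab ha (hαV a (by simp)) hβs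
          obtain ⟨γ, δ, rfl, haγ⟩ := exists_split haβ
          obtain ⟨hleg, hseq⟩ := move_front γ δ s haγ ha hβ
          cases hleg with
          | cons _ hleg' =>
              have hβs' : StableIn (toppleSeq I (γ ++ δ) (topple I a s)).1 V := by
                have : toppleSeq I (γ ++ δ) (topple I a s) = toppleSeq I (γ ++ a :: δ) s :=
                  hseq
                rw [this]; exact hβs
              have h := ih (γ ++ δ) (topple I a s) hα'
                (fun y hy => hαV y (by simp [hy])) hleg'
                (fun y hy => hβV y (by
                  rcases List.mem_append.1 hy with h' | h' <;> simp [h']))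
                hαs hβs'
              calc toppleSeq I (a :: α') s = toppleSeq I α' (topple I a s) := rfl
                _ = toppleSeq I (γ ++ δ) (topple I a s) := h
                _ = toppleSeq I (γ ++ a :: δ) s := hseq

end Aux

/-- **Global abelianness**: if `α` and `β` are legal toppling sequences for `(η,h)`,
both contained in `V`, and both stabilize `(η,h)` in `V`, then `m_α = m_β = m_{V,η,h}`;
in particular `Φ_α(η,h) = Φ_β(η,h)`. -/
theorem global_abelianness {d : ℕ} (I : InstrField d) (V : Set (Site d))
    (η : Config d) (h : Odom d) (α β : List (Site d))
    (hαV : ∀ y ∈ α, y ∈ V) (hβV : ∀ y ∈ β, y ∈ V)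
    (hα : LegalSeq I α (η, h)) (hβ : LegalSeq I β (η, h))
    (hαstab : StableIn (toppleSeq I α (η, h)).1 V)
    (hβstab : StableIn (toppleSeq I β (η, h)).1 V) :
    (∀ x : Site d, α.count x = β.count x) ∧
    (∀ x : Site d, (α.count x : ℕ∞) = mV I V η h x) ∧
    toppleSeq I α (η, h) = toppleSeq I β (η, h) := by
  have hcounts : ∀ x : Site d, α.count x = β.count x := fun x =>
    le_antisymm (count_le α β (η, h) hα hαV hβ hβstab x)
      (count_le β α (η, h) hβ hβV hα hαstab x)
  refine ⟨hcounts, fun x => ?_, ?_⟩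
  · refine le_antisymm ?_ ?_
    · exact le_iSup₂ (f := fun (β : List (Site d))
        (_ : (∀ y ∈ β, y ∈ V) ∧ LegalSeq I β (η, h)) => (β.count x : ℕ∞)) α ⟨hαV, hα⟩
    · refine iSup₂_le fun γ hγ => ?_
      exact_mod_cast count_le γ α (η, h) hγ.2 hγ.1 hα hαstab x
  · exact final_eq α β (η, h) hα hαV hβ hβV hαstab hβstab


end ARW
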